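/- If C = (1, c₂, c₃, c₄, c₅, c₆) = (1, c₂, c₃, c₄, c₅, 2c₅ − c₂) is canonical and the subsystem (1, c₂, c₃, c₄, c₅) is noncanonical, then C = (1, 2, 3, c₄, c₄+1, 2c₄) with c₄ > 4. -/

import Mathlib

/-!
Let `W` be the least counterexample of `(c₁, …, c₅)`. Below `c₆` both greedy algorithms agree
while the six-coin optimum is at most the five-coin one, so canonicity of `C` gives `W ≥ c₆`;
the Kozen–Zaks bound gives `W < c₄ + c₅`. Canonicity of `C` also means that a sum of two coins
is paid greedily with at most two coins, so what is left after the first greedy coin is a coin. For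
`c₄ + c₅` this gives `c₄ + c₅ = c₆ + 1`, hence `W = c₆` and `c₅ + 1 = c₄ + c₂`; for `c₃ + c₄`
it gives `2 c₂ = c₃ + 1`. Now `c₄ = c₃ + 1` would make `W = c₅ + c₃`, which greedy pays
optimally. Finally, if `c₂ = d + 1 > 2`, then `2 c₄` forces `c₄ + 1 = c₃ + c₂`, so
`cᵢ = (i - 1) d + 1` and `W = 7 d + 1`, which greedy again pays optimally.
-/

open Finset

/-- `x` is a representation of value `v` in the coin system `c 1, …, c n`. -/
def IsRepr (n : ℕ) (c : ℕ → ℕ) (v : ℕ) (x : ℕ → ℕ) : Prop :=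
  ∑ i ∈ Finset.Icc 1 n, c i * x i = v

/-- Minimum number of coins over all representations of `v`. -/
noncomputable def opt (n : ℕ) (c : ℕ → ℕ) (v : ℕ) : ℕ :=
  sInf {k | ∃ x : ℕ → ℕ, IsRepr n c v x ∧ ∑ i ∈ Finset.Icc 1 n, x i = k}

/-- Number of coins used by the greedy algorithm to pay `v`. -/
def grd (n : ℕ) (c : ℕ → ℕ) (v : ℕ) : ℕ :=
  if hv : v = 0 then 0
  else
    let m := ((Finset.Icc 1 n).filter (fun i => c i ≤ v)).sup c
    if hm : 0 < m then grd n c (v - m) + 1 else 0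
termination_by v
decreasing_by omega

/-- The system is canonical: greedy is optimal for every positive value. -/
def Canonical (n : ℕ) (c : ℕ → ℕ) : Prop :=
  ∀ v, 0 < v → opt n c v = grd n c v

/-- `w` is a counterexample to the system. -/
def IsCex (n : ℕ) (c : ℕ → ℕ) (w : ℕ) : Prop :=
  0 < w ∧ opt n c w < grd n c w

/-- `w` is the minimum counterexample to the system. -/
def MinCex (n : ℕ) (c : ℕ → ℕ) (w : ℕ) : Prop :=
  IsCex n c w ∧ ∀ u, IsCex n c u → w ≤ u

/-- A (currency) system: first coin is `1` and coins strictly increase. -/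
def IsSystem (n : ℕ) (c : ℕ → ℕ) : Prop :=
  c 1 = 1 ∧ StrictMonoOn c (Set.Icc 1 n)

section Representations

variable {n : ℕ} {c : ℕ → ℕ}

lemma IsRepr.add {a b : ℕ} {x y : ℕ → ℕ} (hx : IsRepr n c a x) (hy : IsRepr n c b y) :
    IsRepr n c (a + b) (x + y) := by
  unfold IsRepr at *
  simp only [Pi.add_apply, mul_add, sum_add_distrib, hx, hy]

lemma isRepr_zero : IsRepr n c 0 0 := by simp [IsRepr]

lemma isRepr_single {k : ℕ} (hk : k ∈ Icc 1 n) (m : ℕ) :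
    IsRepr n c (c k * m) (Pi.single k m) := by
  simp only [IsRepr, Pi.single_apply, mul_ite, mul_zero, sum_ite_eq', hk, if_true]

lemma sum_single {k : ℕ} (hk : k ∈ Icc 1 n) (m : ℕ) :
    ∑ i ∈ Icc 1 n, (Pi.single k m : ℕ → ℕ) i = m := by
  simp [sum_pi_single', hk]

lemma IsRepr.le_mul_sum (hc : StrictMonoOn c (Set.Icc 1 n)) {v : ℕ} {x : ℕ → ℕ}
    (hx : IsRepr n c v x) : v ≤ c n * ∑ i ∈ Icc 1 n, x i := by
  rw [← hx, mul_sum]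
  refine sum_le_sum fun i hi => Nat.mul_le_mul_right _ ?_
  have hi' := mem_Icc.1 hi
  exact (hc.le_iff_le ⟨hi'.1, hi'.2⟩ ⟨hi'.1.trans hi'.2, le_rfl⟩).2 hi'.2

lemma IsRepr.exists_pos {v : ℕ} {x : ℕ → ℕ} (hx : IsRepr n c v x) (hv : 0 < v) :
    ∃ j ∈ Icc 1 n, 0 < x j := by
  by_contra! h
  have : ∑ i ∈ Icc 1 n, c i * x i = 0 :=
    sum_eq_zero fun i hi => by rw [Nat.eq_zero_of_le_zero (h i hi), mul_zero]
  unfold IsRepr at hx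
  omega

lemma opt_le_of_isRepr {v : ℕ} {x : ℕ → ℕ} (hx : IsRepr n c v x) :
    opt n c v ≤ ∑ i ∈ Icc 1 n, x i :=
  Nat.sInf_le ⟨x, hx, rfl⟩

lemma exists_isRepr_sum_eq_opt (h1 : c 1 = 1) (hn : 1 ≤ n) (v : ℕ) :
    ∃ x, IsRepr n c v x ∧ ∑ i ∈ Icc 1 n, x i = opt n c v := by
  have hv : IsRepr n c v (Pi.single 1 v) := by
    simpa [h1] using isRepr_single (c := c) (mem_Icc.2 ⟨le_rfl, hn⟩) v
  exact Nat.sInf_mem (s := {k | ∃ x, IsRepr n c v x ∧ ∑ i ∈ Icc 1 n, x i = k}) ⟨_, _, hv, rfl⟩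

lemma opt_add_le (h1 : c 1 = 1) (hn : 1 ≤ n) (a b : ℕ) :
    opt n c (a + b) ≤ opt n c a + opt n c b := by
  obtain ⟨x, hx, hxs⟩ := exists_isRepr_sum_eq_opt h1 hn a
  obtain ⟨y, hy, hys⟩ := exists_isRepr_sum_eq_opt h1 hn b
  simpa only [Pi.add_apply, sum_add_distrib, hxs, hys] using opt_le_of_isRepr (hx.add hy)

lemma opt_coin_le_one {k : ℕ} (hk : k ∈ Icc 1 n) : opt n c (c k) ≤ 1 := by
  simpa [sum_single hk] using opt_le_of_isRepr (isRepr_single (c := c) hk 1)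

lemma opt_add_coin_le (h1 : c 1 = 1) (hn : 1 ≤ n) {k : ℕ} (hk : k ∈ Icc 1 n) (v : ℕ) :
    opt n c (v + c k) ≤ opt n c v + 1 :=
  (opt_add_le h1 hn v (c k)).trans (Nat.add_le_add_left (opt_coin_le_one hk) _)

lemma opt_sub_add_one_le {v k : ℕ} {x : ℕ → ℕ} (hx : IsRepr n c v x) (hk : k ∈ Icc 1 n)
    (hxk : 0 < x k) : opt n c (v - c k) + 1 ≤ ∑ i ∈ Icc 1 n, x i := by
  set y : ℕ → ℕ := x - Pi.single k 1
  have hxy : x = y + Pi.single k 1 := by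
    funext i
    by_cases h : i = k
    · subst h
      simp only [Pi.add_apply, Pi.sub_apply, Pi.single_eq_same, y]
      omega
    · simp [y, h]
  have hy : IsRepr n c (v - c k) y := by
    have hv := IsRepr.add (rfl : IsRepr n c (∑ i ∈ Icc 1 n, c i * y i) y) (isRepr_single hk 1)
    rw [← hxy, mul_one] at hv
    have : ∑ i ∈ Icc 1 n, c i * y i + c k = v := hv.symm.trans hx
    unfold IsRepr
    omega
  have := opt_le_of_isRepr hy
  rw [hxy]
  simp only [Pi.add_apply, sum_add_distrib, sum_single hk]
  omega

lemma two_le_opt_of_lt (h1 : c 1 = 1) (hn : 1 ≤ n) (hc : StrictMonoOn c (Set.Icc 1 n))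
    {v : ℕ} (hv : c n < v) : 2 ≤ opt n c v := by
  obtain ⟨x, hx, hxs⟩ := exists_isRepr_sum_eq_opt h1 hn v
  have := hx.le_mul_sum hc
  by_contra! h
  rw [hxs] at this
  have : c n * opt n c v ≤ c n * 1 := Nat.mul_le_mul_left _ (by omega)
  omega

lemma opt_succ_le (h1 : c 1 = 1) (hn : 1 ≤ n) (v : ℕ) : opt (n + 1) c v ≤ opt n c v := by
  obtain ⟨x, hx, hxs⟩ := exists_isRepr_sum_eq_opt h1 hn v
  set y := Function.update x (n + 1) 0
  have hsum (g : ℕ → ℕ) : ∑ i ∈ Icc 1 (n + 1), g i * y i = ∑ i ∈ Icc 1 n, g i * x i := by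
    rw [sum_Icc_succ_top (by omega)]
    simp only [y, Function.update_self, mul_zero, add_zero]
    refine sum_congr rfl fun i hi => ?_
    rw [Function.update_of_ne (by grind)]
  have hy : IsRepr (n + 1) c v y := (hsum c).trans hx
  have hcount := hsum fun _ => 1
  simp only [one_mul] at hcount
  exact (opt_le_of_isRepr hy).trans_eq (hcount.trans hxs)

end Representations

def IsGreedyChoice (n : ℕ) (c : ℕ → ℕ) (v k : ℕ) : Prop :=
  k ∈ Icc 1 n ∧ c k ≤ v ∧ ∀ i ∈ Icc 1 n, c i ≤ v → c i ≤ c k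

section Greedy

variable {n : ℕ} {c : ℕ → ℕ}

lemma coin_pos (h1 : c 1 = 1) (hc : StrictMonoOn c (Set.Icc 1 n)) {k : ℕ} (hk : k ∈ Icc 1 n) :
    0 < c k := by
  have hk' := mem_Icc.1 hk
  have := (hc.le_iff_le (a := 1) ⟨le_rfl, hk'.1.trans hk'.2⟩ ⟨hk'.1, hk'.2⟩).2 hk'.1
  omega

lemma grd_zero : grd n c 0 = 0 := by
  rw [grd]; simp

lemma IsGreedyChoice.grd_eq {v k : ℕ} (h : IsGreedyChoice n c v k) (hck : 0 < c k) :
    grd n c v = grd n c (v - c k) + 1 := by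
  obtain ⟨hk, hkv, hmax⟩ := h
  have hsup : ((Icc 1 n).filter (fun i => c i ≤ v)).sup c = c k :=
    le_antisymm (Finset.sup_le fun i hi => hmax i (mem_filter.1 hi).1 (mem_filter.1 hi).2)
      (le_sup (mem_filter.2 ⟨hk, hkv⟩))
  rw [grd]
  simp [show v ≠ 0 by omega, hsup, hck]

lemma IsGreedyChoice.coin_pos (h1 : c 1 = 1) (hn : 1 ≤ n) {v k : ℕ}
    (h : IsGreedyChoice n c v k) (hv : 0 < v) : 0 < c k := by
  have := h.2.2 1 (mem_Icc.2 ⟨le_rfl, hn⟩) (by omega)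
  omega

lemma exists_isGreedyChoice (h1 : c 1 = 1) (hn : 1 ≤ n) {v : ℕ} (hv : 0 < v) :
    ∃ k, IsGreedyChoice n c v k := by
  have h1v : 1 ∈ (Icc 1 n).filter (fun i => c i ≤ v) :=
    mem_filter.2 ⟨mem_Icc.2 ⟨le_rfl, hn⟩, by omega⟩
  obtain ⟨k, hk, hck⟩ := exists_mem_eq_sup _ ⟨1, h1v⟩ c
  exact ⟨k, (mem_filter.1 hk).1, (mem_filter.1 hk).2,
    fun i hi hiv => hck ▸ le_sup (mem_filter.2 ⟨hi, hiv⟩)⟩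

lemma isGreedyChoice_coin {k : ℕ} (hk : k ∈ Icc 1 n) : IsGreedyChoice n c (c k) k :=
  ⟨hk, le_rfl, fun _ _ h => h⟩

lemma isGreedyChoice_last (hc : StrictMonoOn c (Set.Icc 1 n)) (hn : 1 ≤ n) {v : ℕ}
    (hv : c n ≤ v) : IsGreedyChoice n c v n := by
  refine ⟨mem_Icc.2 ⟨hn, le_rfl⟩, hv, fun i hi _ => ?_⟩
  have hi' := mem_Icc.1 hi
  exact (hc.le_iff_le ⟨hi'.1, hi'.2⟩ ⟨hn, le_rfl⟩).2 hi'.2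

lemma isGreedyChoice_of_lt_succ (hc : StrictMonoOn c (Set.Icc 1 n)) {v k : ℕ} (hk : 1 ≤ k)
    (hkn : k < n) (hlo : c k ≤ v) (hhi : v < c (k + 1)) : IsGreedyChoice n c v k := by
  refine ⟨mem_Icc.2 ⟨hk, hkn.le⟩, hlo, fun i hi hiv => ?_⟩
  have hi' := mem_Icc.1 hi
  have hik : i < k + 1 := (hc.lt_iff_lt (b := k + 1) ⟨hi'.1, hi'.2⟩ ⟨by omega, hkn⟩).1 (by omega)
  exact (hc.le_iff_le ⟨hi'.1, hi'.2⟩ ⟨hk, hkn.le⟩).2 (by omega)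

lemma IsGreedyChoice.succ {v k : ℕ} (h : IsGreedyChoice n c v k) (hv : v < c (n + 1)) :
    IsGreedyChoice (n + 1) c v k := by
  obtain ⟨hk, hkv, hmax⟩ := h
  refine ⟨Icc_subset_Icc_right n.le_succ hk, hkv, fun i hi hiv => hmax i ?_ hiv⟩
  have hi' := mem_Icc.1 hi
  have hin : i ≠ n + 1 := by rintro rfl; omega
  exact mem_Icc.2 ⟨hi'.1, by omega⟩

lemma grd_coin {k : ℕ} (hk : k ∈ Icc 1 n) (hck : 0 < c k) : grd n c (c k) = 1 := by
  simp [(isGreedyChoice_coin hk).grd_eq hck, grd_zero]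

lemma exists_isRepr_sum_eq_grd (h1 : c 1 = 1) (hn : 1 ≤ n) (v : ℕ) :
    ∃ x, IsRepr n c v x ∧ ∑ i ∈ Icc 1 n, x i = grd n c v := by
  induction v using Nat.strong_induction_on with
  | _ v ih =>
    rcases Nat.eq_zero_or_pos v with rfl | hv
    · exact ⟨0, isRepr_zero, by simp [grd_zero]⟩
    obtain ⟨k, hk⟩ := exists_isGreedyChoice h1 hn hv
    have hck := hk.coin_pos h1 hn hv
    obtain ⟨x, hx, hxs⟩ := ih (v - c k) (by omega)
    refine ⟨x + Pi.single k 1, ?_, ?_⟩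
    · simpa [Nat.sub_add_cancel hk.2.1] using hx.add (isRepr_single hk.1 1)
    · simp only [Pi.add_apply, sum_add_distrib, hxs, sum_single hk.1, hk.grd_eq hck]

lemma opt_le_grd (h1 : c 1 = 1) (hn : 1 ≤ n) (v : ℕ) : opt n c v ≤ grd n c v := by
  obtain ⟨x, hx, hxs⟩ := exists_isRepr_sum_eq_grd h1 hn v
  exact hxs ▸ opt_le_of_isRepr hx

lemma grd_pos (h1 : c 1 = 1) (hn : 1 ≤ n) {v : ℕ} (hv : 0 < v) : 0 < grd n c v := by
  obtain ⟨k, hk⟩ := exists_isGreedyChoice h1 hn hv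
  rw [hk.grd_eq (hk.coin_pos h1 hn hv)]
  omega

lemma eq_zero_or_exists_coin_eq_of_grd_le_one (h1 : c 1 = 1) (hn : 1 ≤ n) {v : ℕ}
    (hg : grd n c v ≤ 1) : v = 0 ∨ ∃ k ∈ Icc 1 n, c k = v := by
  rcases Nat.eq_zero_or_pos v with hv | hv
  · exact Or.inl hv
  obtain ⟨k, hk⟩ := exists_isGreedyChoice h1 hn hv
  rw [hk.grd_eq (hk.coin_pos h1 hn hv)] at hg
  have hrest : v - c k = 0 := by
    by_contra h
    have := grd_pos h1 hn (Nat.pos_of_ne_zero h)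
    omega
  exact Or.inr ⟨k, hk.1, by have := hk.2.1; omega⟩

lemma grd_eq_self_of_lt (h1 : c 1 = 1) (hc : StrictMonoOn c (Set.Icc 1 n)) (hn : 2 ≤ n) {v : ℕ}
    (hv : v < c 2) : grd n c v = v := by
  induction v using Nat.strong_induction_on with
  | _ v ih =>
    rcases Nat.eq_zero_or_pos v with rfl | hv0
    · exact grd_zero
    have hg := (isGreedyChoice_of_lt_succ hc le_rfl hn (by omega) hv).grd_eq (by omega)
    rw [hg, h1, ih (v - 1) (by omega) (by omega)]
    omega

lemma grd_succ_eq_of_lt (h1 : c 1 = 1) (hn : 1 ≤ n) {v : ℕ} (hv : v < c (n + 1)) :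
    grd (n + 1) c v = grd n c v := by
  induction v using Nat.strong_induction_on with
  | _ v ih =>
    rcases Nat.eq_zero_or_pos v with rfl | hv0
    · rw [grd_zero, grd_zero]
    obtain ⟨k, hk⟩ := exists_isGreedyChoice h1 hn hv0
    have hck := hk.coin_pos h1 hn hv0
    rw [hk.grd_eq hck, (hk.succ hv).grd_eq hck, ih _ (by omega) (by omega)]

end Greedy

section Counterexamples

variable {n : ℕ} {c : ℕ → ℕ}

lemma exists_minCex (h1 : c 1 = 1) (hn : 1 ≤ n) (h : ¬ Canonical n c) : ∃ w, MinCex n c w := by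
  classical
  have hne : ∃ w, IsCex n c w := by
    simp only [Canonical, not_forall] at h
    obtain ⟨v, hv, hne⟩ := h
    exact ⟨v, hv, lt_of_le_of_ne (opt_le_grd h1 hn v) hne⟩
  exact ⟨Nat.find hne, Nat.find_spec hne, fun u hu => Nat.find_min' hne hu⟩

lemma MinCex.opt_eq_grd {w : ℕ} (hw : MinCex n c w) (h1 : c 1 = 1) (hn : 1 ≤ n) {u : ℕ}
    (hu : 0 < u) (huw : u < w) : opt n c u = grd n c u := by
  refine le_antisymm (opt_le_grd h1 hn u) (not_lt.1 fun h => ?_)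
  exact absurd (hw.2 u ⟨hu, h⟩) (by omega)

lemma IsCex.coin_succ_le_of_canonical {w : ℕ} (hw : IsCex n c w) (h1 : c 1 = 1) (hn : 1 ≤ n)
    (hC : Canonical (n + 1) c) : c (n + 1) ≤ w := by
  by_contra! h
  have := opt_succ_le h1 hn w
  have := grd_succ_eq_of_lt h1 hn h
  have := hC w hw.1
  have := hw.2
  omega

lemma opt_eq_opt_sub_add_one (h1 : c 1 = 1) (hn : 1 ≤ n) {v j : ℕ} {x : ℕ → ℕ}
    (hx : IsRepr n c v x) (hxs : ∑ i ∈ Icc 1 n, x i = opt n c v) (hj : j ∈ Icc 1 n)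
    (hxj : 0 < x j) : opt n c v = opt n c (v - c j) + 1 := by
  have hle := opt_sub_add_one_le hx hj hxj
  have hcj : c j ≤ v := by
    have := single_le_sum (f := fun i => c i * x i) (fun i _ => Nat.zero_le _) hj
    have := Nat.le_mul_of_pos_right (c j) hxj
    unfold IsRepr at hx
    omega
  have := opt_add_coin_le h1 hn hj (v - c j)
  rw [Nat.sub_add_cancel hcj] at this
  omega

/-- Kozen–Zaks: remove a coin `c j` of an optimal representation of `w`; below `w` greedy is
optimal, and comparing with the greedy payment of `w` (which starts with `c (n + 1)`) shows
that `w` is no counterexample once `w ≥ c n + c (n + 1)`. -/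
lemma MinCex.lt_coin_add_coin_succ {w : ℕ} (hw : MinCex (n + 1) c w) (h1 : c 1 = 1)
    (hc : StrictMonoOn c (Set.Icc 1 (n + 1))) (hn : 1 ≤ n) : w < c n + c (n + 1) := by
  by_contra! hle
  have hn' : 1 ≤ n + 1 := by omega
  have hcn : 0 < c n := coin_pos h1 hc (mem_Icc.2 ⟨hn, by omega⟩)
  have hcn' : 0 < c (n + 1) := coin_pos h1 hc (mem_Icc.2 ⟨hn', le_rfl⟩)
  have hgw := (isGreedyChoice_last hc hn' (v := w) (by omega)).grd_eq (by omega)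
  obtain ⟨x, hx, hxs⟩ := exists_isRepr_sum_eq_opt h1 hn' w
  obtain ⟨j, hj, hxj⟩ := hx.exists_pos hw.1.1
  have hopt := opt_eq_opt_sub_add_one h1 hn' hx hxs hj hxj
  have hcex := hw.1.2
  have hj' := mem_Icc.1 hj
  rcases eq_or_lt_of_le hj'.2 with rfl | hjn
  · have := hw.opt_eq_grd h1 hn' (u := w - c (n + 1)) (by omega) (by omega)
    omega
  have hcj : c j ≤ c n := (hc.le_iff_le ⟨hj'.1, hj'.2⟩ ⟨hn, by omega⟩).2 (by omega)
  have hcj0 : 0 < c j := coin_pos h1 hc hj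
  obtain ⟨r, hr⟩ : ∃ r, w = c (n + 1) + c j + r := ⟨w - c (n + 1) - c j, by omega⟩
  have hu := (isGreedyChoice_last hc hn' (v := w - c j) (by omega)).grd_eq (by omega)
  have e1 := hw.opt_eq_grd h1 hn' (u := w - c j) (by omega) (by omega)
  have e2 := hw.opt_eq_grd h1 hn' (u := w - c (n + 1)) (by omega) (by omega)
  have hsub := opt_add_coin_le h1 hn' hj r
  have hr' := opt_le_grd h1 hn' r
  rw [show w - c j - c (n + 1) = r by omega] at hu
  rw [show w - c (n + 1) = r + c j by omega] at hgw e2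
  omega

lemma not_isCex_coin_last_add (h1 : c 1 = 1) (hc : StrictMonoOn c (Set.Icc 1 n)) {k : ℕ}
    (hk : k ∈ Icc 1 n) : ¬ IsCex n c (c n + c k) := by
  rintro ⟨-, hlt⟩
  have hn : 1 ≤ n := (mem_Icc.1 hk).1.trans (mem_Icc.1 hk).2
  have hck : 0 < c k := coin_pos h1 hc hk
  have hg := (isGreedyChoice_last hc hn (v := c n + c k) (by omega)).grd_eq
    (coin_pos h1 hc (mem_Icc.2 ⟨hn, le_rfl⟩))
  rw [Nat.add_sub_cancel_left, grd_coin hk hck] at hg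
  have := two_le_opt_of_lt h1 hn hc (v := c n + c k) (by omega)
  omega

end Counterexamples

section Canonical

variable {n : ℕ} {c : ℕ → ℕ}

lemma Canonical.eq_zero_or_exists_coin_eq_sub (hC : Canonical n c) (h1 : c 1 = 1) (hn : 1 ≤ n)
    {i j k : ℕ} (hi : i ∈ Icc 1 n) (hj : j ∈ Icc 1 n) (hk : IsGreedyChoice n c (c i + c j) k) :
    c i + c j - c k = 0 ∨ ∃ l ∈ Icc 1 n, c l = c i + c j - c k := by
  rcases Nat.eq_zero_or_pos (c i + c j) with h0 | hv
  · exact Or.inl (by omega)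
  refine eq_zero_or_exists_coin_eq_of_grd_le_one h1 hn ?_
  have hopt : opt n c (c i + c j) ≤ 2 := by
    have := opt_add_coin_le h1 hn hj (c i)
    have := opt_coin_le_one (c := c) hi
    omega
  have := hk.grd_eq (hk.coin_pos h1 hn hv)
  have := hC _ hv
  omega

lemma Canonical.add_eq_last_add_one (hC : Canonical n c) (h1 : c 1 = 1)
    (hc : StrictMonoOn c (Set.Icc 1 n)) (hn : 2 ≤ n) {i j : ℕ} (hi : i ∈ Icc 1 n)
    (hj : j ∈ Icc 1 n) (hlo : c n < c i + c j) (hhi : c i + c j < c n + c 2) :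
    c i + c j = c n + 1 := by
  obtain h | ⟨l, hl, hcl⟩ := hC.eq_zero_or_exists_coin_eq_sub h1 (by omega) hi hj
    (isGreedyChoice_last hc (by omega) hlo.le)
  · omega
  have hl' := mem_Icc.1 hl
  have hl1 : l < 2 := (hc.lt_iff_lt ⟨hl'.1, hl'.2⟩ ⟨by norm_num, hn⟩).1 (by omega)
  rw [show l = 1 by omega, h1] at hcl
  omega

end Canonical

lemma coin_chain_six {c : ℕ → ℕ} (hc : StrictMonoOn c (Set.Icc 1 6)) :
    c 1 < c 2 ∧ c 2 < c 3 ∧ c 3 < c 4 ∧ c 4 < c 5 ∧ c 5 < c 6 := by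
  refine ⟨hc ?_ ?_ ?_, hc ?_ ?_ ?_, hc ?_ ?_ ?_, hc ?_ ?_ ?_, hc ?_ ?_ ?_⟩ <;> simp

/-- With `c i = (i - 1) d + 1`, a payment of `7 d + 1` with `k` coins satisfies
`k + d s = 7 d + 1` where `s ≤ 4 k`, which forces `k > d`; greedy uses `c 5 + c 3 + (d - 1) c 1`. -/
lemma not_isCex_seven_mul_add_one {c : ℕ → ℕ} (h1 : c 1 = 1) (hc : StrictMonoOn c (Set.Icc 1 5))
    {d : ℕ} (hd : 2 ≤ d) (h2 : c 2 = d + 1) (h3 : c 3 = 2 * d + 1) (h4 : c 4 = 3 * d + 1)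
    (h5 : c 5 = 4 * d + 1) : ¬ IsCex 5 c (7 * d + 1) := by
  rintro ⟨-, hlt⟩
  have hg5 := (isGreedyChoice_last hc (by norm_num) (v := 7 * d + 1) (by omega)).grd_eq (by omega)
  have hg3 := (isGreedyChoice_of_lt_succ hc (k := 3) (v := 7 * d + 1 - c 5) (by norm_num)
    (by norm_num) (by omega) (show _ < c 4 by omega)).grd_eq (by omega)
  have hg1 := grd_eq_self_of_lt h1 hc (by norm_num) (v := 7 * d + 1 - c 5 - c 3) (by omega)
  obtain ⟨x, hx, hxs⟩ := exists_isRepr_sum_eq_opt (n := 5) h1 (by norm_num) (7 * d + 1)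
  simp only [IsRepr, Nat.reduceAdd, Nat.one_le_ofNat, sum_Icc_succ_top, Icc_self, sum_singleton,
    h1, h2, h3, h4, h5] at hx hxs
  have key : (x 1 + x 2 + x 3 + x 4 + x 5) + d * (x 2 + 2 * x 3 + 3 * x 4 + 4 * x 5)
      = 7 * d + 1 := by rw [← hx]; ring
  rcases le_or_gt (x 2 + 2 * x 3 + 3 * x 4 + 4 * x 5) 6 with h | h
  · have := Nat.mul_le_mul_left d h
    omega
  · have := Nat.mul_le_mul_left d h
    omega

lemma coin_two_eq_two {c : ℕ → ℕ} (h1 : c 1 = 1) (hc : StrictMonoOn c (Set.Icc 1 6))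
    (hC : Canonical 6 c) (hcex : IsCex 5 c (c 6)) (h456 : c 4 + c 5 = c 6 + 1)
    (h256 : c 6 + c 2 = 2 * c 5) (h23 : 2 * c 2 = c 3 + 1) : c 2 = 2 := by
  obtain ⟨l12, l23, l34, l45, l56⟩ := coin_chain_six hc
  by_contra h
  have h234 : c 4 + 1 = c 3 + c 2 := by
    obtain h | ⟨l, hl, hcl⟩ := hC.eq_zero_or_exists_coin_eq_sub h1 (by norm_num) (i := 4) (j := 4)
      (by simp) (by simp) (isGreedyChoice_of_lt_succ hc (k := 5) (by norm_num) (by norm_num)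
      (by omega) (show _ < c 6 by omega))
    · omega
    · obtain ⟨hl1, hl6⟩ := mem_Icc.1 hl
      interval_cases l <;> omega
  exact not_isCex_seven_mul_add_one h1 (hc.mono (Set.Icc_subset_Icc_right (by norm_num)))
    (d := c 2 - 1) (by omega) (by omega) (by omega) (by omega) (by omega)
    (by rwa [show 7 * (c 2 - 1) + 1 = c 6 by omega])

theorem case_two_c5_sub_c2 (c : ℕ → ℕ) (hsys : IsSystem 6 c)
    (h6 : c 6 = 2 * c 5 - c 2)
    (hC : Canonical 6 c) (hC' : ¬ Canonical 5 c) :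
    c 2 = 2 ∧ c 3 = 3 ∧ c 5 = c 4 + 1 ∧ c 6 = 2 * c 4 ∧ 4 < c 4 := by
  obtain ⟨h1, hc⟩ := hsys
  have hc5 : StrictMonoOn c (Set.Icc 1 5) := hc.mono (Set.Icc_subset_Icc_right (by norm_num))
  obtain ⟨l12, l23, l34, l45, l56⟩ := coin_chain_six hc
  obtain ⟨W, hW⟩ := exists_minCex h1 (by norm_num) hC'
  have hW6 : c 6 ≤ W := hW.1.coin_succ_le_of_canonical h1 (by norm_num) hC
  have hW45 : W < c 4 + c 5 := hW.lt_coin_add_coin_succ h1 hc5 (by norm_num)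
  have h456 : c 4 + c 5 = c 6 + 1 :=
    hC.add_eq_last_add_one h1 hc (by norm_num) (by simp) (by simp) (by omega) (by omega)
  have hcex : IsCex 5 c (c 6) := by
    rw [show c 6 = W by omega]
    exact hW.1
  have h34 : c 3 + 2 ≤ c 4 := by
    by_contra h
    exact not_isCex_coin_last_add h1 hc5 (k := 3) (by simp) (by rwa [show c 5 + c 3 = c 6 by omega])
  have h23 : 2 * c 2 = c 3 + 1 := by
    obtain h | ⟨l, hl, hcl⟩ := hC.eq_zero_or_exists_coin_eq_sub h1 (by norm_num) (i := 3) (j := 4)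
      (by simp) (by simp) (isGreedyChoice_of_lt_succ hc (k := 5) (by norm_num) (by norm_num)
      (by omega) (show _ < c 6 by omega))
    · omega
    · obtain ⟨hl1, hl6⟩ := mem_Icc.1 hl
      interval_cases l <;> omega
  have h2 : c 2 = 2 := coin_two_eq_two h1 hc hC hcex h456 (by omega) h23
  omega
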